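/- With M = (1ₙ - WW̄)⁻¹, z ∈ ℂⁿ, η = M(z + Wz̄), the two expressions 2F = 2z̄ᵗMz + zᵗW̄Mz + z̄ᵗMWz̄ and 2F' = 2η̄ᵗη - ηᵗW̄η - η̄ᵗWη̄ are equal: F = F'. -/
import Mathlib


open Matrix

noncomputable section

/-- entrywise complex conjugation of a matrix -/
def mconj {m n : Type*} (A : Matrix m n ℂ) : Matrix m n ℂ := A.map (starRingEnd ℂ)

/-- entrywise complex conjugation of a vector -/
def vconj {n : Type*} (z : n → ℂ) : n → ℂ := fun i => starRingEnd ℂ (z i)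


lemma mconj_mul {n : ℕ} (A B : Matrix (Fin n) (Fin n) ℂ) : mconj (A * B) = mconj A * mconj B := by
  simp [mconj, Matrix.map_mul]

lemma mconj_one {n : ℕ} : mconj (1 : Matrix (Fin n) (Fin n) ℂ) = 1 := by
  simp [mconj]

lemma mconj_sub {n : ℕ} (A B : Matrix (Fin n) (Fin n) ℂ) : mconj (A - B) = mconj A - mconj B := by
  simp [mconj, Matrix.map_sub]

lemma mconj_mconj {n : ℕ} (A : Matrix (Fin n) (Fin n) ℂ) : mconj (mconj A) = A := by
  ext i j; simp [mconj]

lemma mconj_transpose {n : ℕ} (A : Matrix (Fin n) (Fin n) ℂ) : (mconj A)ᵀ = mconj (Aᵀ) := by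
  ext i j; simp [mconj]

lemma vconj_vconj {n : ℕ} (v : Fin n → ℂ) : vconj (vconj v) = v := by
  funext i; simp [vconj]

lemma vconj_mulVec {n : ℕ} (A : Matrix (Fin n) (Fin n) ℂ) (v : Fin n → ℂ) :
    vconj (A.mulVec v) = (mconj A).mulVec (vconj v) := by
  funext i
  simp [vconj, mconj, Matrix.mulVec, dotProduct, map_sum]

lemma vconj_add {n : ℕ} (a b : Fin n → ℂ) : vconj (a + b) = vconj a + vconj b := by
  funext i; simp [vconj]

lemma dot_shift {n : ℕ} (A : Matrix (Fin n) (Fin n) ℂ) (v w : Fin n → ℂ) :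
    A.mulVec v ⬝ᵥ w = v ⬝ᵥ Aᵀ.mulVec w := by
  rw [dotProduct_mulVec, vecMul_transpose]

/-- 2z̄ᵗMz + zᵗW̄Mz + z̄ᵗMWz̄ = 2η̄ᵗη - ηᵗW̄η - η̄ᵗWη̄
for η = M(z + Wz̄), M = (1 - WW̄)⁻¹. -/
theorem kaehler_potential_two_forms (n : ℕ) (W : Matrix (Fin n) (Fin n) ℂ)
    (hWsymm : Wᵀ = W)
    (hinv : IsUnit ((1 : Matrix (Fin n) (Fin n) ℂ) - W * mconj W))
    (M : Matrix (Fin n) (Fin n) ℂ) (hM : M = (1 - W * mconj W)⁻¹)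
    (z η : Fin n → ℂ) (hη : η = M.mulVec (z + W.mulVec (vconj z))) :
    2 * (vconj z ⬝ᵥ M.mulVec z) + (z ⬝ᵥ (mconj W * M).mulVec z)
      + (vconj z ⬝ᵥ (M * W).mulVec (vconj z))
    = 2 * (vconj η ⬝ᵥ η) - (η ⬝ᵥ (mconj W).mulVec η)
      - (vconj η ⬝ᵥ W.mulVec (vconj η)) := by
  set Wb := mconj W with hWb
  have hWbT : Wbᵀ = Wb := by rw [hWb, mconj_transpose, hWsymm]
  have hdet : IsUnit ((1 - W * Wb).det) := (Matrix.isUnit_iff_isUnit_det _).mp hinv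
  have h1 : M * (1 - W * Wb) = 1 := by rw [hM]; exact Matrix.nonsing_inv_mul _ hdet
  have h1' : (1 - W * Wb) * M = 1 := by rw [hM]; exact Matrix.mul_nonsing_inv _ hdet
  set Mb := mconj M with hMb
  have h2 : Mb * (1 - Wb * W) = 1 := by
    have := congrArg mconj h1
    rwa [mconj_mul, mconj_sub, mconj_one, mconj_mul, ← hWb, mconj_mconj, ← hMb] at this
  have hsubT : (1 - W * Wb)ᵀ = 1 - Wb * W := by
    rw [Matrix.transpose_sub, Matrix.transpose_one, Matrix.transpose_mul, hWbT, hWsymm]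
  have hsubT2 : (1 - Wb * W)ᵀ = 1 - W * Wb := by
    rw [← hsubT, Matrix.transpose_transpose]
  have hMT : Mᵀ = Mb := by
    have hT : (1 - Wb * W) * Mᵀ = 1 := by
      have := congrArg Matrix.transpose h1
      rwa [Matrix.transpose_mul, hsubT, Matrix.transpose_one] at this
    calc Mᵀ = (Mb * (1 - Wb * W)) * Mᵀ := by rw [h2, Matrix.one_mul]
      _ = Mb * ((1 - Wb * W) * Mᵀ) := by rw [Matrix.mul_assoc]
      _ = Mb := by rw [hT, Matrix.mul_one]
  have hMbT : Mbᵀ = M := by rw [← hMT, Matrix.transpose_transpose]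
  have h2' : (1 - Wb * W) * Mb = 1 := by
    have := congrArg Matrix.transpose h1
    rwa [Matrix.transpose_mul, hsubT, Matrix.transpose_one, hMT] at this
  have hswap : W * (1 - Wb * W) = (1 - W * Wb) * W := by noncomm_ring
  have hcomm : M * W = W * Mb := by
    calc M * W = M * W * ((1 - Wb * W) * Mb) := by rw [h2', Matrix.mul_one]
      _ = M * (W * (1 - Wb * W)) * Mb := by noncomm_ring
      _ = M * ((1 - W * Wb) * W) * Mb := by rw [hswap]
      _ = (M * (1 - W * Wb)) * (W * Mb) := by noncomm_ring
      _ = W * Mb := by rw [h1, Matrix.one_mul]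
  have hcomm2 : Wb * M = Mb * Wb := by
    have := congrArg mconj hcomm
    rw [mconj_mul, mconj_mul, hMb, mconj_mconj, ← hMb, ← hWb] at this
    exact this.symm
  -- vectors
  set zb := vconj z with hzb
  set u := z + W.mulVec zb with hu
  set ub := vconj u with hub
  have hub' : ub = zb + Wb.mulVec z := by
    rw [hub, hu, vconj_add, vconj_mulVec, ← hWb, hzb, vconj_vconj]
  have hηe : η = M.mulVec u := hη
  have hηb : vconj η = Mb.mulVec ub := by rw [hηe, vconj_mulVec, ← hMb, ← hub]
  have t1 : vconj η ⬝ᵥ η = ub ⬝ᵥ (M * M).mulVec u := by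
    rw [hηb, hηe, dot_shift, hMbT, Matrix.mulVec_mulVec]
  have t2 : η ⬝ᵥ Wb.mulVec η = u ⬝ᵥ (Wb * (M * M)).mulVec u := by
    have hX : Mb * Wb * M = Wb * (M * M) := by
      rw [← hcomm2, Matrix.mul_assoc]
    rw [hηe, dot_shift, hMT, Matrix.mulVec_mulVec, Matrix.mulVec_mulVec, hX]
  have t3 : vconj η ⬝ᵥ W.mulVec (vconj η) = ub ⬝ᵥ ((M * M) * W).mulVec ub := by
    have hX : M * W * Mb = M * M * W := by
      rw [Matrix.mul_assoc, ← hcomm, Matrix.mul_assoc]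
    rw [hηb, dot_shift, hMbT, Matrix.mulVec_mulVec, Matrix.mulVec_mulVec, hX]
  have gA : ub ⬝ᵥ (M * M).mulVec u - u ⬝ᵥ (Wb * (M * M)).mulVec u = zb ⬝ᵥ M.mulVec u := by
    have e1 : u ⬝ᵥ (Wb * (M * M)).mulVec u = Wb.mulVec u ⬝ᵥ (M * M).mulVec u := by
      rw [dot_shift, hWbT, Matrix.mulVec_mulVec]
    have e2 : ub - Wb.mulVec u = (1 - Wb * W).mulVec zb := by
      rw [hub', hu, Matrix.mulVec_add, Matrix.mulVec_mulVec, Matrix.sub_mulVec,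
        Matrix.one_mulVec]
      abel
    have e3 : (1 - W * Wb) * (M * M) = M := by
      rw [← Matrix.mul_assoc, h1', Matrix.one_mul]
    rw [e1, ← sub_dotProduct, e2, dot_shift, hsubT2, Matrix.mulVec_mulVec, e3]
  have gB : ub ⬝ᵥ (M * M).mulVec u - ub ⬝ᵥ ((M * M) * W).mulVec ub = ub ⬝ᵥ M.mulVec z := by
    have e2 : u - W.mulVec ub = (1 - W * Wb).mulVec z := by
      rw [hub', hu, Matrix.mulVec_add, Matrix.mulVec_mulVec, Matrix.sub_mulVec,
        Matrix.one_mulVec]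
      abel
    have e3 : M * M * (1 - W * Wb) = M := by
      rw [Matrix.mul_assoc, h1, Matrix.mul_one]
    have e4 : (M * M * W) *ᵥ ub = (M * M) *ᵥ (W *ᵥ ub) :=
      (Matrix.mulVec_mulVec ub (M * M) W).symm
    rw [e4, ← dotProduct_sub, ← Matrix.mulVec_sub, e2, Matrix.mulVec_mulVec, e3]
  have fA : zb ⬝ᵥ M.mulVec u = zb ⬝ᵥ M.mulVec z + zb ⬝ᵥ (M * W).mulVec zb := by
    rw [hu, Matrix.mulVec_add, dotProduct_add, Matrix.mulVec_mulVec]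
  have fB : ub ⬝ᵥ M.mulVec z = zb ⬝ᵥ M.mulVec z + z ⬝ᵥ (Wb * M).mulVec z := by
    rw [hub', add_dotProduct]
    congr 1
    rw [dot_shift, hWbT, Matrix.mulVec_mulVec]
  rw [t1, t2, t3]
  linear_combination -gA - gB - fA - fB
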